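/- arXiv:1608.08275 — 4 statements merged into one kernel-verified Lean document; each statement's English description precedes it below -/
import Mathlib

section
/- Let n ≥ 1 and K_1,…,K_{n+1} be positive real numbers, and let B be the n×n stiffness matrix built from them. Then det(B) = (∏_{j=1}^{n+1} K_j) · (∑_{i=1}^{n+1} 1/K_i); in particular det(B) > 0. -/
/-!
Expanding along the first column shows that `D n K = det (stiffB n K)` satisfies the continuant
recurrence `D (m+2) K = (K 0 + K 1) D (m+1) (K ∘ succ) - (K 1)² D m (K ∘ succ ∘ succ)`.
The elementary symmetric polynomial `e_n(K) = ∑ᵢ ∏_{j ≠ i} K j` satisfies the same recurrence,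
since `e_n(K) = ∏_{j ≥ 1} K j + K 0 · e_{n-1}(K ∘ succ)`, and has the same initial values;
hence `det B = e_n(K) = (∏ K j) (∑ 1 / K i)`, which is positive for positive `K`.
-/

open Matrix

/-- The stiffness matrix of a spring-mass system with spring constants `K 0, …, K n`
(`n × n`, tridiagonal, with `B j j = K j + K (j+1)` and off-diagonal entries `-K (j+1)`). -/
noncomputable def stiffB (n : ℕ) (K : Fin (n + 1) → ℝ) : Matrix (Fin n) (Fin n) ℝ :=
  Matrix.of fun i j =>
    if (i : ℕ) = (j : ℕ) then K i.castSucc + K i.succ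
    else if (i : ℕ) + 1 = (j : ℕ) then -K i.succ
    else if (j : ℕ) + 1 = (i : ℕ) then -K j.succ
    else 0

section SumProdOmit

variable {R : Type*} {n : ℕ}

def sumProdOmit [CommSemiring R] (K : Fin (n + 1) → R) : R :=
  ∑ i : Fin (n + 1), ∏ j : Fin n, K (i.succAbove j)

theorem sumProdOmit_succ [CommSemiring R] (K : Fin (n + 2) → R) :
    sumProdOmit K = ∏ j : Fin (n + 1), K j.succ + K 0 * sumProdOmit (K ∘ Fin.succ) := by
  rw [sumProdOmit, Fin.sum_univ_succ, Fin.succAbove_zero, sumProdOmit, Finset.mul_sum]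
  congr 1
  refine Finset.sum_congr rfl fun i _ => ?_
  simp only [Fin.prod_univ_succ, Fin.succ_succAbove_zero, Fin.succ_succAbove_succ,
    Function.comp_apply]

theorem sumProdOmit_eq_prod_mul_sum_inv [Field R] {K : Fin (n + 1) → R} (hK : ∀ j, K j ≠ 0) :
    sumProdOmit K = (∏ j, K j) * ∑ i, (K i)⁻¹ := by
  rw [sumProdOmit, Finset.mul_sum]
  refine Finset.sum_congr rfl fun i _ => ?_
  rw [Fin.prod_univ_succAbove K i, mul_comm (K i), mul_assoc, mul_inv_cancel₀ (hK i), mul_one]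

end SumProdOmit

theorem stiffB_apply_eq_zero {n : ℕ} (K : Fin (n + 1) → ℝ) {i j : Fin n}
    (h : (i : ℕ) + 1 < j ∨ (j : ℕ) + 1 < i) : stiffB n K i j = 0 := by
  simp only [stiffB, of_apply]
  rw [if_neg (by omega), if_neg (by omega), if_neg (by omega)]

theorem stiffB_submatrix_succ (n : ℕ) (K : Fin (n + 2) → ℝ) :
    (stiffB (n + 1) K).submatrix Fin.succ Fin.succ = stiffB n (K ∘ Fin.succ) := by
  ext i j
  simp only [stiffB, submatrix_apply, of_apply, Fin.val_succ, Function.comp_apply,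
    Nat.add_right_cancel_iff]
  split_ifs <;> rfl

theorem det_stiffB_succ_succ (m : ℕ) (K : Fin (m + 3) → ℝ) :
    (stiffB (m + 2) K).det = (K 0 + K 1) * (stiffB (m + 1) (K ∘ Fin.succ)).det
      - K 1 ^ 2 * (stiffB m (K ∘ Fin.succ ∘ Fin.succ)).det := by
  have minor_one : ((stiffB (m + 2) K).submatrix (Fin.succAbove 1) Fin.succ).det
      = -K 1 * (stiffB m (K ∘ Fin.succ ∘ Fin.succ)).det := by
    rw [det_succ_row_zero, Fin.sum_univ_succ, Finset.sum_eq_zero, add_zero]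
    · have hrows : (Fin.succAbove (1 : Fin (m + 2))) ∘ Fin.succ = Fin.succ ∘ Fin.succ :=
        funext Fin.one_succAbove_succ
      rw [submatrix_submatrix, Fin.succAbove_zero, hrows, ← submatrix_submatrix,
        stiffB_submatrix_succ, stiffB_submatrix_succ]
      simp [stiffB]
    · intro j _
      rw [submatrix_apply, stiffB_apply_eq_zero K (.inl (by simp)), mul_zero, zero_mul]
  rw [det_succ_column_zero, Fin.sum_univ_succ, Fin.sum_univ_succ, Finset.sum_eq_zero, add_zero,
    Fin.succAbove_zero, stiffB_submatrix_succ, Fin.succ_zero_eq_one, minor_one]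
  · simp [stiffB]
    ring
  · intro i _
    rw [stiffB_apply_eq_zero K (.inr (by simp)), mul_zero, zero_mul]

theorem det_stiffB : ∀ {n : ℕ} (K : Fin (n + 1) → ℝ), (stiffB n K).det = sumProdOmit K
  | 0, K => by simp [sumProdOmit]
  | 1, K => by simp [sumProdOmit, stiffB, Fin.sum_univ_two, add_comm]
  | m + 2, K => by
    rw [det_stiffB_succ_succ, det_stiffB, det_stiffB, sumProdOmit_succ K,
      sumProdOmit_succ (K ∘ Fin.succ)]
    simp only [Fin.prod_univ_succ (n := m + 1), Function.comp_apply, Function.comp_assoc,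
      Fin.succ_zero_eq_one]
    ring

theorem stiffB_det_general (n : ℕ) (K : Fin (n + 1) → ℝ) (hK : ∀ j, 0 < K j) :
    (stiffB n K).det = (∏ j, K j) * (∑ i, (K i)⁻¹) ∧ 0 < (stiffB n K).det := by
  have hdet : (stiffB n K).det = (∏ j, K j) * (∑ i, (K i)⁻¹) :=
    (det_stiffB K).trans (sumProdOmit_eq_prod_mul_sum_inv fun j => (hK j).ne')
  refine ⟨hdet, hdet ▸ mul_pos (Finset.prod_pos fun j _ => hK j) ?_⟩
  exact Finset.sum_pos (fun i _ => inv_pos.mpr (hK i)) Finset.univ_nonempty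

/-- The determinant of the stiffness matrix built from positive spring constants
`K_1, …, K_{n+1}` equals `(∏ K_j) ⬝ (∑ 1/K_i)`; in particular it is positive. -/
theorem stiffB_det (n : ℕ) (hn : 1 ≤ n) (K : Fin (n + 1) → ℝ) (hK : ∀ j, 0 < K j) :
    (stiffB n K).det = (∏ j, K j) * (∑ i, (K i)⁻¹) ∧ 0 < (stiffB n K).det :=
  stiffB_det_general n K hK
end

section
/- Let n ≥ 1, let H be an n×n real symmetric tridiagonal matrix that is positive definite and has all sub- and super-diagonal entries negative, and let α > 0 and β > 0. Then the unique solution g ∈ ℝ^n of the linear system H g = (α, 0, …, 0, β)ᵀ (where for n = 1 the right-hand side is (α + β)) has all entries strictly positive. -/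
open Matrix

/-! A positive definite matrix with nonpositive off-diagonal entries (a Stieltjes matrix) is
monotone: `H g ≥ 0` forces `g ≥ 0`, because the negative part `g⁻` satisfies
`g⁻ ⬝ H g⁻ = g⁻ ⬝ H g⁺ - g⁻ ⬝ H g ≤ 0`, the cross term being `≤ 0` since `g⁺` and `g⁻` have
disjoint supports. Strict positivity then propagates along the chain of
nonzero sub-diagonal entries: if `g` vanishes at `m + 1`, row `m + 1` of `H g ≥ 0` forces
`g m = 0`, and so on down to `g 0 = 0`, which is incompatible with `(H g) 0 = α + … > 0`. -/

/-- A matrix is tridiagonal: entries vanish when the indices differ by more than one. -/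
def IsTridiagonal {n : ℕ} (H : Matrix (Fin n) (Fin n) ℝ) : Prop :=
  ∀ i j : Fin n, ((i : ℕ) + 1 < (j : ℕ) ∨ (j : ℕ) + 1 < (i : ℕ)) → H i j = 0

lemma IsTridiagonal.apply_nonpos_of_ne {n : ℕ} {H : Matrix (Fin n) (Fin n) ℝ}
    (htri : IsTridiagonal H)
    (hneg : ∀ i j : Fin n, ((i : ℕ) + 1 = (j : ℕ) ∨ (j : ℕ) + 1 = (i : ℕ)) → H i j < 0)
    {i j : Fin n} (hij : i ≠ j) : H i j ≤ 0 := by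
  have hij' : (i : ℕ) ≠ j := Fin.val_ne_of_ne hij
  by_cases hadj : (i : ℕ) + 1 = j ∨ (j : ℕ) + 1 = i
  · exact (hneg i j hadj).le
  · exact (htri i j (by omega)).le

lemma negPart_mul_posPart_eq_zero {α : Type*} [Ring α] [LinearOrder α] [IsOrderedRing α]
    (a : α) : a⁻ * a⁺ = 0 := by
  rcases le_total 0 a with ha | ha
  · rw [negPart_eq_zero.2 ha, zero_mul]
  · rw [posPart_eq_zero.2 ha, mul_zero]

namespace Matrix

variable {ι : Type*} {H : Matrix ι ι ℝ}

lemma mul_apply_nonpos_of_eq_zero (hoff : ∀ i j, i ≠ j → H i j ≤ 0) {g : ι → ℝ} (hg : 0 ≤ g)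
    {i : ι} (hgi : g i = 0) (j : ι) : H i j * g j ≤ 0 := by
  rcases eq_or_ne i j with rfl | hij
  · rw [hgi, mul_zero]
  · exact mul_nonpos_of_nonpos_of_nonneg (hoff i j hij) (hg j)

variable [Fintype ι]

lemma dotProduct_mulVec_nonpos_of_offDiag_nonpos (hoff : ∀ i j, i ≠ j → H i j ≤ 0)
    {x y : ι → ℝ} (hx : 0 ≤ x) (hy : 0 ≤ y) (hxy : ∀ i, x i * y i = 0) :
    x ⬝ᵥ H *ᵥ y ≤ 0 := by
  simp only [dotProduct, mulVec, Finset.mul_sum]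
  refine Finset.sum_nonpos fun i _ => Finset.sum_nonpos fun j _ => ?_
  rcases eq_or_ne i j with rfl | hij
  · rw [mul_left_comm, hxy, mul_zero]
  · exact mul_nonpos_of_nonneg_of_nonpos (hx i)
      (mul_nonpos_of_nonpos_of_nonneg (hoff i j hij) (hy j))

theorem PosDef.nonneg_of_mulVec_nonneg (hpd : H.PosDef) (hoff : ∀ i j, i ≠ j → H i j ≤ 0)
    {g : ι → ℝ} (hg : 0 ≤ H *ᵥ g) : 0 ≤ g := by
  by_contra hneg
  have hg_neg : g⁻ ≠ 0 := mt negPart_eq_zero.1 hneg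
  have hquad_pos : 0 < g⁻ ⬝ᵥ H *ᵥ g⁻ := by
    simpa using hpd.dotProduct_mulVec_pos hg_neg
  have hcross : g⁻ ⬝ᵥ H *ᵥ g⁺ ≤ 0 :=
    dotProduct_mulVec_nonpos_of_offDiag_nonpos hoff (negPart_nonneg g) (posPart_nonneg g)
      fun i => by simpa using negPart_mul_posPart_eq_zero (g i)
  have hrhs : 0 ≤ g⁻ ⬝ᵥ H *ᵥ g :=
    Finset.sum_nonneg fun i _ => mul_nonneg (negPart_nonneg g i) (hg i)
  have hsplit : g⁻ ⬝ᵥ H *ᵥ g = g⁻ ⬝ᵥ H *ᵥ g⁺ - g⁻ ⬝ᵥ H *ᵥ g⁻ := by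
    rw [← dotProduct_sub, ← mulVec_sub, posPart_sub_negPart]
  linarith

lemma pos_of_mulVec_apply_pos (hoff : ∀ i j, i ≠ j → H i j ≤ 0) {g : ι → ℝ} (hg : 0 ≤ g)
    {i : ι} (hHg : 0 < (H *ᵥ g) i) : 0 < g i := by
  refine (hg i).lt_of_ne' fun hgi => hHg.not_ge ?_
  exact Finset.sum_nonpos fun j _ => mul_apply_nonpos_of_eq_zero hoff hg hgi j

lemma eq_zero_of_mulVec_apply_nonneg (hoff : ∀ i j, i ≠ j → H i j ≤ 0) {g : ι → ℝ}
    (hg : 0 ≤ g) {i j : ι} (hgi : g i = 0) (hHg : 0 ≤ (H *ᵥ g) i) (hHij : H i j < 0) :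
    g j = 0 := by
  have hterms := (Finset.sum_eq_zero_iff_of_nonpos fun k _ =>
    mul_apply_nonpos_of_eq_zero hoff hg hgi k).1
    (le_antisymm (Finset.sum_nonpos fun k _ => mul_apply_nonpos_of_eq_zero hoff hg hgi k) hHg)
  exact (mul_eq_zero.1 (hterms j (Finset.mem_univ j))).resolve_left hHij.ne

end Matrix

theorem Matrix.pos_of_mulVec_nonneg_of_subdiag_neg {n : ℕ} {H : Matrix (Fin n) (Fin n) ℝ}
    (hoff : ∀ i j, i ≠ j → H i j ≤ 0)
    (hsub : ∀ i j : Fin n, (j : ℕ) + 1 = i → H i j < 0)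
    {g : Fin n → ℝ} (hg : 0 ≤ g) (hHg : 0 ≤ H *ᵥ g)
    (hHg₀ : ∀ i : Fin n, (i : ℕ) = 0 → 0 < (H *ᵥ g) i) (i : Fin n) : 0 < g i := by
  obtain ⟨m, hm⟩ := i
  induction m with
  | zero => exact pos_of_mulVec_apply_pos hoff hg (hHg₀ _ rfl)
  | succ m ih =>
    refine (hg _).lt_of_ne' fun hgm => ?_
    exact (ih (by omega)).ne'
      (eq_zero_of_mulVec_apply_nonneg hoff hg hgm (hHg _) (hsub _ ⟨m, by omega⟩ rfl))

theorem solution_of_boundary_system_pos_general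
    (n : ℕ) (H : Matrix (Fin n) (Fin n) ℝ)
    (htri : IsTridiagonal H)
    (hneg : ∀ i j : Fin n, ((i : ℕ) + 1 = (j : ℕ) ∨ (j : ℕ) + 1 = (i : ℕ)) → H i j < 0)
    (hpd : H.PosDef)
    (α β : ℝ) (hα : 0 < α) (hβ : 0 < β)
    (g : Fin n → ℝ)
    (hg : H.mulVec g = fun i : Fin n =>
      (if (i : ℕ) = 0 then α else 0) + (if (i : ℕ) = n - 1 then β else 0)) :
    ∀ i, 0 < g i := by
  have hoff : ∀ i j, i ≠ j → H i j ≤ 0 := fun _ _ => htri.apply_nonpos_of_ne hneg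
  have hHg : 0 ≤ H *ᵥ g := fun i => by
    rw [hg, Pi.zero_apply]
    dsimp only
    split_ifs <;> linarith
  have hHg₀ : ∀ i : Fin n, (i : ℕ) = 0 → 0 < (H *ᵥ g) i := fun i hi => by
    rw [hg]
    dsimp only
    split_ifs <;> linarith
  exact pos_of_mulVec_nonneg_of_subdiag_neg hoff (fun i j hji => hneg i j (.inr hji))
    (hpd.nonneg_of_mulVec_nonneg hoff hHg) hHg hHg₀

/-- If `H` is a real symmetric tridiagonal positive definite matrix with all sub- and
super-diagonal entries negative, and `α, β > 0`, then the (unique) solution `g` of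
`H g = (α, 0, …, 0, β)ᵀ` (which reads `H g = (α + β)` when `n = 1`) has all entries
strictly positive. -/
theorem solution_of_boundary_system_pos
    (n : ℕ) (hn : 1 ≤ n) (H : Matrix (Fin n) (Fin n) ℝ)
    (hsym : H.IsSymm) (htri : IsTridiagonal H)
    (hneg : ∀ i j : Fin n, ((i : ℕ) + 1 = (j : ℕ) ∨ (j : ℕ) + 1 = (i : ℕ)) → H i j < 0)
    (hpd : H.PosDef)
    (α β : ℝ) (hα : 0 < α) (hβ : 0 < β)
    (g : Fin n → ℝ)
    (hg : H.mulVec g = fun i : Fin n =>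
      (if (i : ℕ) = 0 then α else 0) + (if (i : ℕ) = n - 1 then β else 0)) :
    ∀ i, 0 < g i :=
  solution_of_boundary_system_pos_general n H htri hneg hpd α β hα hβ g hg
end

section
/- Let n ≥ 1, let H̃ ∈ T_{A,n}, and let α > 0 and β > 0. If two spring-mass systems with positive masses and positive spring constants both have associated matrix H̃ and both satisfy K_1/√(m_1) = α and K_{n+1}/√(m_n) = β, then they have identical masses (m_1,…,m_n) and identical spring constants (K_1,…,K_{n+1}). -/
open Matrix

/-- The associated matrix `H = M^{-1/2} B M^{-1/2}` of a spring-mass system with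
masses `m` and spring constants `K`. -/
noncomputable def assocH (n : ℕ) (m : Fin n → ℝ) (K : Fin (n + 1) → ℝ) :
    Matrix (Fin n) (Fin n) ℝ :=
  Matrix.diagonal (fun i => (Real.sqrt (m i))⁻¹) * stiffB n K *
    Matrix.diagonal (fun i => (Real.sqrt (m i))⁻¹)

/-- The set `T_{A,n}`: real symmetric tridiagonal matrices with negative sub- and
super-diagonal entries which are positive definite. -/
def MemTA {n : ℕ} (H : Matrix (Fin n) (Fin n) ℝ) : Prop :=
  H.IsSymm ∧ IsTridiagonal H ∧
    (∀ i j : Fin n, ((i : ℕ) + 1 = (j : ℕ) ∨ (j : ℕ) + 1 = (i : ℕ)) → H i j < 0) ∧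
    H.PosDef

/-!
Write `r i = √(m' i) / √(m i)` and let `t` be `r` extended by `1` at the two walls. Equality
of the associated matrices says `B' = diag r * B * diag r`; its off-diagonal entries together
with the two boundary ratios give `K'_j = t_j t_{j+1} K_j` for every spring, and then its
diagonal entries say that the flux `K_j (t_j - t_{j+1})` is the same for all springs. These
differences telescope to `t_0 - t_{n+1} = 0` and all have the sign of the flux, so the flux
vanishes and `t ≡ 1`.
-/

theorem Fin.sum_univ_castSucc_sub_succ {n : ℕ} (f : Fin (n + 2) → ℝ) :
    ∑ j : Fin (n + 1), (f j.castSucc - f j.succ) = f 0 - f (Fin.last _) := by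
  rw [Finset.sum_sub_distrib]
  linarith [Fin.sum_univ_succ f, Fin.sum_univ_castSucc f]

theorem Fin.eq_apply_zero_of_flux_eq {n : ℕ} {k : Fin (n + 1) → ℝ} {t : Fin (n + 2) → ℝ}
    (hk : ∀ j, 0 < k j)
    (hflux : ∀ i : Fin n, k i.castSucc * (t i.castSucc.castSucc - t i.castSucc.succ) =
      k i.succ * (t i.succ.castSucc - t i.succ.succ))
    (hend : t (Fin.last _) = t 0) (j : Fin (n + 2)) : t j = t 0 := by
  set c := k 0 * (t 0 - t 1)
  have hdiff : ∀ j, t j.castSucc - t j.succ = c / k j := by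
    intro j
    rw [eq_div_iff (hk j).ne', mul_comm]
    induction j using Fin.induction with
    | zero => rfl
    | succ i ih => rw [← hflux, ih]
  have hsum : c * ∑ j, (k j)⁻¹ = 0 := by
    simp_rw [Finset.mul_sum, ← div_eq_mul_inv, ← hdiff, Fin.sum_univ_castSucc_sub_succ, hend,
      sub_self]
  have hc : c = 0 := (mul_eq_zero.1 hsum).resolve_right
    (Finset.sum_pos (fun j _ => inv_pos.2 (hk j)) Finset.univ_nonempty).ne'
  induction j using Fin.induction with
  | zero => rfl
  | succ i ih => rw [← ih, eq_comm, ← sub_eq_zero, hdiff, hc, zero_div]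

theorem stiffB_apply_self {n : ℕ} (K : Fin (n + 1) → ℝ) (i : Fin n) :
    stiffB n K i i = K i.castSucc + K i.succ := by
  simp [stiffB]

theorem stiffB_apply_castSucc_succ {n : ℕ} (K : Fin (n + 2) → ℝ) (i : Fin n) :
    stiffB (n + 1) K i.castSucc i.succ = -K i.castSucc.succ := by
  simp [stiffB]

theorem stiffB_eq_of_assocH_eq {n : ℕ} {m m' : Fin n → ℝ} {K K' : Fin (n + 1) → ℝ}
    (hm' : ∀ i, 0 < m' i) (h : assocH n m K = assocH n m' K') (i j : Fin n) :
    stiffB n K' i j = √(m' i) / √(m i) * stiffB n K i j * (√(m' j) / √(m j)) := by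
  have hij := congrFun (congrFun h i) j
  simp only [assocH, mul_diagonal, diagonal_mul] at hij
  have hi := (Real.sqrt_pos.2 (hm' i)).ne'
  have hj := (Real.sqrt_pos.2 (hm' j)).ne'
  field_simp at hij ⊢
  linear_combination -hij

def padWithOne {n : ℕ} (r : Fin n → ℝ) : Fin (n + 2) → ℝ :=
  Fin.cons 1 (Fin.snoc r 1)

section padWithOne

variable {n : ℕ} (r : Fin n → ℝ)

@[simp] theorem padWithOne_zero : padWithOne r 0 = 1 := rfl

@[simp] theorem padWithOne_last : padWithOne r (Fin.last _) = 1 := by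
  simp [padWithOne, ← Fin.succ_last]

@[simp] theorem padWithOne_castSucc_succ (i : Fin n) : padWithOne r i.castSucc.succ = r i := by
  simp [padWithOne]

@[simp] theorem padWithOne_succ_castSucc (i : Fin n) : padWithOne r i.succ.castSucc = r i :=
  padWithOne_castSucc_succ r i

end padWithOne

theorem spring_eq_padWithOne_mul {p : ℕ} {K K' : Fin (p + 2) → ℝ} {r : Fin (p + 1) → ℝ}
    (hB : ∀ i j, stiffB (p + 1) K' i j = r i * stiffB (p + 1) K i j * r j)
    (h0 : K' 0 = r 0 * K 0) (hlast : K' (Fin.last _) = r (Fin.last _) * K (Fin.last _))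
    (j : Fin (p + 2)) : K' j = padWithOne r j.castSucc * padWithOne r j.succ * K j := by
  induction j using Fin.cases with
  | zero =>
    show K' 0 = 1 * r 0 * K 0
    rw [h0, one_mul]
  | succ s =>
    induction s using Fin.lastCases with
    | last =>
      rw [padWithOne_succ_castSucc, Fin.succ_last, Fin.succ_last, padWithOne_last, hlast, mul_one]
    | cast c =>
      have hc := hB c.castSucc c.succ
      rw [stiffB_apply_castSucc_succ, stiffB_apply_castSucc_succ] at hc
      have hleft : padWithOne r c.castSucc.succ.castSucc = r c.castSucc :=
        padWithOne_succ_castSucc r _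
      have hright : padWithOne r c.castSucc.succ.succ = r c.succ :=
        padWithOne_castSucc_succ r c.succ
      rw [hleft, hright]
      linear_combination -hc

theorem flux_eq_of_stiffB_eq {n : ℕ} {K K' : Fin (n + 1) → ℝ} {r : Fin n → ℝ}
    (hr : ∀ i, r i ≠ 0) (hB : ∀ i j, stiffB n K' i j = r i * stiffB n K i j * r j)
    (hspring : ∀ j, K' j = padWithOne r j.castSucc * padWithOne r j.succ * K j) (i : Fin n) :
    K i.castSucc * (padWithOne r i.castSucc.castSucc - padWithOne r i.castSucc.succ) =
      K i.succ * (padWithOne r i.succ.castSucc - padWithOne r i.succ.succ) := by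
  have hii := hB i i
  rw [stiffB_apply_self, stiffB_apply_self, hspring, hspring i.succ] at hii
  simp only [padWithOne_castSucc_succ, padWithOne_succ_castSucc] at hii ⊢
  refine mul_left_cancel₀ (hr i) ?_
  linear_combination hii

/-- Uniqueness: two spring-mass systems with positive masses and positive spring constants
having the same associated matrix `H̃ ∈ T_{A,n}` and the same boundary ratios
`K_1/√(m_1) = α`, `K_{n+1}/√(m_n) = β` coincide. -/
theorem spring_mass_system_unique_of_memTA
    (n : ℕ) (hn : 1 ≤ n) (Ht : Matrix (Fin n) (Fin n) ℝ)
    (α β : ℝ)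
    (m m' : Fin n → ℝ) (K K' : Fin (n + 1) → ℝ)
    (hm : ∀ i, 0 < m i) (hK : ∀ j, 0 < K j)
    (hm' : ∀ i, 0 < m' i)
    (hH : assocH n m K = Ht) (hH' : assocH n m' K' = Ht)
    (hα1 : K 0 / Real.sqrt (m ⟨0, by omega⟩) = α)
    (hβ1 : K (Fin.last n) / Real.sqrt (m ⟨n - 1, by omega⟩) = β)
    (hα2 : K' 0 / Real.sqrt (m' ⟨0, by omega⟩) = α)
    (hβ2 : K' (Fin.last n) / Real.sqrt (m' ⟨n - 1, by omega⟩) = β) :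
    m = m' ∧ K = K' := by
  obtain ⟨p, rfl⟩ : ∃ p, n = p + 1 := ⟨n - 1, by omega⟩
  set r : Fin (p + 1) → ℝ := fun i => √(m' i) / √(m i)
  have hr : ∀ i, r i ≠ 0 := fun i =>
    div_ne_zero (Real.sqrt_pos.2 (hm' i)).ne' (Real.sqrt_pos.2 (hm i)).ne'
  have hwall {i j} (h : K j / √(m i) = K' j / √(m' i)) : K' j = r i * K j := by
    rw [← div_mul_cancel₀ (K' j) (Real.sqrt_pos.2 (hm' i)).ne', ← h]
    ring
  have hB := stiffB_eq_of_assocH_eq hm' (hH.trans hH'.symm)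
  have hspring := spring_eq_padWithOne_mul (r := r) hB (hwall (hα1.trans hα2.symm))
    (hwall (hβ1.trans hβ2.symm))
  have hone : ∀ j, padWithOne r j = 1 := fun j =>
    (Fin.eq_apply_zero_of_flux_eq hK (flux_eq_of_stiffB_eq hr hB hspring) (by simp) j).trans
      (padWithOne_zero r)
  refine ⟨funext fun i => ?_, funext fun j => by rw [hspring, hone, hone, one_mul, one_mul]⟩
  have hri : √(m' i) / √(m i) = 1 := (padWithOne_castSucc_succ r i).symm.trans (hone _)
  rw [div_eq_one_iff_eq (Real.sqrt_pos.2 (hm i)).ne', Real.sqrt_inj (hm' i).le (hm i).le] at hri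
  exact hri.symm
end

section
/- Fix n ≥ 2, W > 0, ρ > 0, γ_1 ≥ 0, and set c = (4/3)πρ. Define the map Φ : ℝ_{>0}^n × ℝ^{n−1} → ℝ^{2n−1} sending (r_1,…,r_n, γ_2,…,γ_n) to the list of the n diagonal entries H(1,1),…,H(n,n) followed by the n−1 off-diagonal entries H(1,2),…,H(n−1,n) of the granular-chain associated matrix H(r,γ). Then the Jacobian matrix of Φ is invertible (has nonzero determinant) at every point with r_1,…,r_n > 0. -/
open Matrix

/-- The associated matrix `H(r, γ)` of a generalized granular chain with radii `r` and
wall-spring stiffnesses `γ` (here `γ j` is the stiffness attached to the `(j+1)`-st bead),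
material constant `W` and density `ρ`, with `c = (4/3)πρ`.  Its diagonal entries are
`H j j = (W (κ_{j-1} + κ_j) + γ_j) / (c r_j³)` (with boundary stiffnesses `r_1^{1/3}`,
`r_n^{1/3}` at the ends) and its off-diagonal entries are
`H j (j+1) = - W κ_j / (c r_j^{3/2} r_{j+1}^{3/2})`, where
`κ_j = (r_j r_{j+1} / (r_j + r_{j+1}))^{1/3}`. -/
noncomputable def granH (n : ℕ) (W ρ : ℝ) (r γ : Fin n → ℝ) :
    Matrix (Fin n) (Fin n) ℝ :=
  Matrix.of fun i j =>
    let c : ℝ := 4 / 3 * Real.pi * ρ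
    let rr : ℕ → ℝ := fun k => if h : k < n then r ⟨k, h⟩ else 0
    if (i : ℕ) = (j : ℕ) then
      (W * ((if (i : ℕ) = 0 then rr 0 ^ ((1 : ℝ) / 3)
             else (rr ((i : ℕ) - 1) * rr i / (rr ((i : ℕ) - 1) + rr i)) ^ ((1 : ℝ) / 3)) +
            (if (i : ℕ) = n - 1 then rr (n - 1) ^ ((1 : ℝ) / 3)
             else (rr i * rr ((i : ℕ) + 1) / (rr i + rr ((i : ℕ) + 1))) ^ ((1 : ℝ) / 3))) +
        γ i) / (c * rr i ^ (3 : ℕ))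
    else if (i : ℕ) + 1 = (j : ℕ) then
      -(W * (rr i * rr ((i : ℕ) + 1) / (rr i + rr ((i : ℕ) + 1))) ^ ((1 : ℝ) / 3)) /
        (c * rr i ^ ((3 : ℝ) / 2) * rr ((i : ℕ) + 1) ^ ((3 : ℝ) / 2))
    else if (j : ℕ) + 1 = (i : ℕ) then
      -(W * (rr j * rr ((j : ℕ) + 1) / (rr j + rr ((j : ℕ) + 1))) ^ ((1 : ℝ) / 3)) /
        (c * rr j ^ ((3 : ℝ) / 2) * rr ((j : ℕ) + 1) ^ ((3 : ℝ) / 2))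
    else 0

/-- The full vector of wall-spring stiffnesses `(γ_1, γ_2, …, γ_n)` built from the fixed
first stiffness `γ_1` and the variable stiffnesses `(γ_2, …, γ_n)`. -/
noncomputable def gammaFull (n : ℕ) (γ1 : ℝ) (γrest : Fin (n - 1) → ℝ) : Fin n → ℝ :=
  fun j => if h : (j : ℕ) = 0 then γ1
    else γrest ⟨(j : ℕ) - 1, by have := j.isLt; omega⟩

/-- The map `Φ` sending `(r_1,…,r_n, γ_2,…,γ_n)` to the `n` diagonal entries followed by
the `n-1` super-diagonal entries of the granular-chain associated matrix `H(r, γ)`. -/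
noncomputable def granPhi (n : ℕ) (W ρ γ1 : ℝ) :
    ((Fin n → ℝ) × (Fin (n - 1) → ℝ)) → ((Fin n → ℝ) × (Fin (n - 1) → ℝ)) :=
  fun p =>
    (fun j => granH n W ρ p.1 (gammaFull n γ1 p.2) j j,
     fun t => granH n W ρ p.1 (gammaFull n γ1 p.2)
       ⟨(t : ℕ), by have := t.isLt; omega⟩ ⟨(t : ℕ) + 1, by have := t.isLt; omega⟩)

/-!
Let `u = (v, w)` lie in the kernel of the Jacobian. The entry `H(j,j+1)` does not involve the
stiffnesses and is strictly increasing in both `r_j` and `r_{j+1}`, so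
`b_j v_j + b'_j v_{j+1} = 0` with `b_j, b'_j > 0`. The entry `H(1,1)` does not involve the free
stiffnesses either; it is strictly decreasing in `r_1` and strictly increasing in `r_2`, so
`a v_1 + a' v_2 = 0` with `a < 0 < a'`. Together with the case `j = 1` of the first relation this
forces `v_1 = 0`, and then `v = 0` along the chain. Finally `H(j+1,j+1)` is affine in `γ_{j+1}`
with slope `1 / (c r_{j+1}^3) ≠ 0`, so `w = 0`.
-/

open Real

noncomputable def granKappa (x y : ℝ) : ℝ := (x * y / (x + y)) ^ ((1 : ℝ) / 3)

noncomputable def granFirstDiag (W c γ1 x y : ℝ) : ℝ :=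
  (W * (x ^ ((1 : ℝ) / 3) + granKappa x y) + γ1) / (c * x ^ 3)

noncomputable def granOffDiag (W c x y : ℝ) : ℝ :=
  -(W * granKappa x y) / (c * x ^ ((3 : ℝ) / 2) * y ^ ((3 : ℝ) / 2))

theorem granKappa_pos {x y : ℝ} (hx : 0 < x) (hy : 0 < y) : 0 < granKappa x y := by
  unfold granKappa; positivity

theorem DifferentiableAt.fun_div_real {E : Type*} [NormedAddCommGroup E] [NormedSpace ℝ E]
    {f g : E → ℝ} {x : E} (hf : DifferentiableAt ℝ f x) (hg : DifferentiableAt ℝ g x)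
    (hx : g x ≠ 0) : DifferentiableAt ℝ (fun y => f y / g y) x := by
  simpa only [div_eq_mul_inv] using hf.fun_mul (hg.fun_inv hx)

theorem DifferentiableAt.granKappa {E : Type*} [NormedAddCommGroup E] [NormedSpace ℝ E]
    {f g : E → ℝ} {x : E} (hf : DifferentiableAt ℝ f x) (hg : DifferentiableAt ℝ g x)
    (hf0 : 0 < f x) (hg0 : 0 < g x) :
    DifferentiableAt ℝ (fun y => granKappa (f y) (g y)) x :=
  ((hf.fun_mul hg).fun_div_real (hf.fun_add hg) (by positivity)).rpow_const
    (Or.inl (by positivity))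

theorem HasDerivAt.granKappa {f g : ℝ → ℝ} {f' g' t : ℝ} (hf : HasDerivAt f f' t)
    (hg : HasDerivAt g g' t) (hf0 : 0 < f t) (hg0 : 0 < g t) :
    HasDerivAt (fun s => granKappa (f s) (g s))
      (granKappa (f t) (g t) * (g t * f' / (3 * f t * (f t + g t)) +
        f t * g' / (3 * g t * (f t + g t)))) t := by
  have hq : 0 < f t * g t / (f t + g t) := by positivity
  unfold _root_.granKappa
  convert ((hf.fun_mul hg).fun_div (hf.fun_add hg) (by positivity)).rpow_const (p := 1 / 3)
    (Or.inl hq.ne') using 1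
  rw [rpow_sub_one hq.ne']
  field_simp
  ring

theorem hasDerivAt_line (x v : ℝ) : HasDerivAt (fun τ : ℝ => x + τ * v) v 0 := by
  simpa using ((hasDerivAt_id (0 : ℝ)).mul_const v).const_add x

theorem exists_hasDerivAt_granFirstDiag_line {W c γ1 x y : ℝ} (hW : 0 < W) (hc : 0 < c)
    (hγ1 : 0 ≤ γ1) (hx : 0 < x) (hy : 0 < y) :
    ∃ a0 a1 : ℝ, a0 < 0 ∧ 0 < a1 ∧ ∀ v0 v1 : ℝ,
      HasDerivAt (fun τ : ℝ => granFirstDiag W c γ1 (x + τ * v0) (y + τ * v1))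
        (a0 * v0 + a1 * v1) 0 := by
  have hκ := granKappa_pos hx hy
  refine ⟨-((8 * W * x ^ ((1 : ℝ) / 3) + 9 * γ1 +
        W * granKappa x y * (9 * x + 8 * y) / (x + y)) / (3 * c * x ^ 4)),
    W * granKappa x y / (3 * y * (x + y) * c * x ^ 2),
    neg_neg_of_pos (by positivity), by positivity, fun v0 v1 => ?_⟩
  have hX := hasDerivAt_line x v0
  have hY := hasDerivAt_line y v1
  have hx0 : 0 < x + 0 * v0 := by simpa using hx
  have hy0 : 0 < y + 0 * v1 := by simpa using hy
  have hden : c * (x + 0 * v0) ^ 3 ≠ 0 := by positivity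
  refine (((((hX.rpow_const (p := 1 / 3) (Or.inl hx0.ne')).fun_add
    (hX.granKappa hY hx0 hy0)).const_mul W).add_const γ1).fun_div ((hX.fun_pow 3).const_mul c)
    hden).congr_deriv ?_
  simp only [zero_mul, add_zero]
  rw [rpow_sub_one hx.ne']
  field_simp
  ring

theorem exists_hasDerivAt_granOffDiag_line {W c x y : ℝ} (hW : 0 < W) (hc : 0 < c)
    (hx : 0 < x) (hy : 0 < y) :
    ∃ b0 b1 : ℝ, 0 < b0 ∧ 0 < b1 ∧ ∀ v0 v1 : ℝ,
      HasDerivAt (fun τ : ℝ => granOffDiag W c (x + τ * v0) (y + τ * v1))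
        (b0 * v0 + b1 * v1) 0 := by
  have hκ := granKappa_pos hx hy
  refine ⟨W * granKappa x y * (9 * x + 7 * y) /
      (6 * x * (x + y) * c * x ^ ((3 : ℝ) / 2) * y ^ ((3 : ℝ) / 2)),
    W * granKappa x y * (7 * x + 9 * y) /
      (6 * y * (x + y) * c * x ^ ((3 : ℝ) / 2) * y ^ ((3 : ℝ) / 2)),
    by positivity, by positivity, fun v0 v1 => ?_⟩
  have hX := hasDerivAt_line x v0
  have hY := hasDerivAt_line y v1
  have hx0 : 0 < x + 0 * v0 := by simpa using hx
  have hy0 : 0 < y + 0 * v1 := by simpa using hy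
  have hden : c * (x + 0 * v0) ^ ((3 : ℝ) / 2) * (y + 0 * v1) ^ ((3 : ℝ) / 2) ≠ 0 := by
    positivity
  refine (((hX.granKappa hY hx0 hy0).const_mul W).fun_neg.fun_div
    (((hX.rpow_const (p := 3 / 2) (Or.inl hx0.ne')).const_mul c).fun_mul
      (hY.rpow_const (p := 3 / 2) (Or.inl hy0.ne'))) hden).congr_deriv ?_
  simp only [zero_mul, add_zero]
  rw [rpow_sub_one hx.ne', rpow_sub_one hy.ne']
  field_simp
  ring

theorem Fin.eq_zero_of_consecutive_relations {n : ℕ} (hn : 2 ≤ n) {v : Fin n → ℝ}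
    {a0 a1 : ℝ} (ha0 : a0 < 0) (ha1 : 0 < a1)
    (h01 : a0 * v ⟨0, by omega⟩ + a1 * v ⟨1, hn⟩ = 0)
    (hchain : ∀ t : Fin (n - 1), ∃ b0 b1 : ℝ, 0 < b0 ∧ 0 < b1 ∧
      b0 * v ⟨t, by omega⟩ + b1 * v ⟨t + 1, by omega⟩ = 0) :
    v = 0 := by
  have hv0 : v ⟨0, by omega⟩ = 0 := by
    obtain ⟨b0, b1, hb0, hb1, h⟩ := hchain ⟨0, by omega⟩
    have hdet : (a0 * b1 - a1 * b0) * v ⟨0, by omega⟩ = 0 := by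
      linear_combination b1 * h01 - a1 * h
    exact (mul_eq_zero.1 hdet).resolve_left (by nlinarith)
  suffices h : ∀ k (hk : k < n), v ⟨k, hk⟩ = 0 from funext fun i => h i i.2
  intro k
  induction k with
  | zero => exact fun _ => hv0
  | succ k ih =>
    intro hk
    obtain ⟨b0, b1, -, hb1, h⟩ := hchain ⟨k, by omega⟩
    rw [ih (by omega), mul_zero, zero_add] at h
    exact (mul_eq_zero.1 h).resolve_left hb1.ne'

section GranPhi

variable {n : ℕ} {W ρ γ1 : ℝ}

theorem gammaFull_zero (hn : 0 < n) (γ : Fin (n - 1) → ℝ) :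
    gammaFull n γ1 γ ⟨0, hn⟩ = γ1 := rfl

theorem gammaFull_succ (γ : Fin (n - 1) → ℝ) (s : Fin (n - 1)) :
    gammaFull n γ1 γ ⟨s + 1, by omega⟩ = γ s := rfl

theorem granPhi_fst_apply (p : (Fin n → ℝ) × (Fin (n - 1) → ℝ)) (j : Fin n) :
    (granPhi n W ρ γ1 p).1 j =
      (W * ((if (j : ℕ) = 0 then p.1 j ^ ((1 : ℝ) / 3)
              else granKappa (p.1 ⟨j - 1, by omega⟩) (p.1 j)) +
            (if h : (j : ℕ) + 1 = n then p.1 j ^ ((1 : ℝ) / 3)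
              else granKappa (p.1 j) (p.1 ⟨j + 1, by omega⟩))) +
        gammaFull n γ1 p.2 j) / (4 / 3 * π * ρ * p.1 j ^ 3) := by
  obtain ⟨j, hj⟩ := j
  have hn1 : j = n - 1 ↔ j + 1 = n := by omega
  by_cases h0 : j = 0 <;> by_cases h1 : j + 1 = n
  · subst h0; subst h1; simp [granPhi, granH]
  · subst h0; simp [granPhi, granH, hn1, h1, granKappa, hj, (by omega : 1 < n)]
  · subst h1; simp [granPhi, granH, h0, granKappa]
  · simp [granPhi, granH, hn1, h0, h1, granKappa, (by omega : j - 1 < n), (by omega : j + 1 < n)]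

theorem granPhi_fst_zero (hn : 2 ≤ n) (p : (Fin n → ℝ) × (Fin (n - 1) → ℝ)) :
    (granPhi n W ρ γ1 p).1 ⟨0, by omega⟩ =
      granFirstDiag W (4 / 3 * π * ρ) γ1 (p.1 ⟨0, by omega⟩) (p.1 ⟨1, hn⟩) := by
  rw [granPhi_fst_apply, gammaFull_zero, granFirstDiag]
  simp [show 1 ≠ n by omega]

theorem granPhi_fst_succ (r : Fin n → ℝ) (γ : Fin (n - 1) → ℝ) (s : Fin (n - 1)) :
    (granPhi n W ρ γ1 (r, γ)).1 ⟨s + 1, by omega⟩ =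
      (granPhi n W ρ γ1 (r, 0)).1 ⟨s + 1, by omega⟩ +
        γ s / (4 / 3 * π * ρ * r ⟨s + 1, by omega⟩ ^ 3) := by
  simp only [granPhi_fst_apply, gammaFull_succ, Pi.zero_apply, add_zero, add_div]

theorem granPhi_snd_apply (p : (Fin n → ℝ) × (Fin (n - 1) → ℝ)) (t : Fin (n - 1)) :
    (granPhi n W ρ γ1 p).2 t =
      granOffDiag W (4 / 3 * π * ρ) (p.1 ⟨t, by omega⟩) (p.1 ⟨t + 1, by omega⟩) := by
  simp [granPhi, granH, granOffDiag, granKappa, (by omega : (t : ℕ) + 1 < n)]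

theorem differentiableAt_granPhi (hρ : 0 < ρ) {r : Fin n → ℝ} (hr : ∀ i, 0 < r i)
    (γ : Fin (n - 1) → ℝ) : DifferentiableAt ℝ (granPhi n W ρ γ1) (r, γ) := by
  have hcoord : ∀ i, DifferentiableAt ℝ
      (fun p : (Fin n → ℝ) × (Fin (n - 1) → ℝ) => p.1 i) (r, γ) :=
    fun i => by fun_prop
  have hκ : ∀ i j, DifferentiableAt ℝ
      (fun p : (Fin n → ℝ) × (Fin (n - 1) → ℝ) => granKappa (p.1 i) (p.1 j)) (r, γ) :=
    fun i j => (hcoord i).granKappa (hcoord j) (hr i) (hr j)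
  have hpow : ∀ i (e : ℝ), DifferentiableAt ℝ
      (fun p : (Fin n → ℝ) × (Fin (n - 1) → ℝ) => p.1 i ^ e) (r, γ) :=
    fun i e => (hcoord i).rpow_const (Or.inl (hr i).ne')
  have hdiag : ∀ j, DifferentiableAt ℝ (fun p => (granPhi n W ρ γ1 p).1 j) (r, γ) := by
    intro j
    simp only [granPhi_fst_apply]
    refine DifferentiableAt.fun_div_real
      (((DifferentiableAt.fun_add ?_ ?_).const_mul W).fun_add ?_) (by fun_prop)
      (by have := hr j; positivity)
    · by_cases h : (j : ℕ) = 0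
      · simpa only [h, if_true] using hpow j _
      · simpa only [h, if_false] using hκ _ _
    · by_cases h : (j : ℕ) + 1 = n
      · simpa only [h, dif_pos] using hpow j _
      · simpa only [h, dif_neg, not_false_eq_true] using hκ _ _
    · unfold gammaFull
      by_cases h : (j : ℕ) = 0
      · simp only [h, dif_pos]; fun_prop
      · simp only [h, dif_neg, not_false_eq_true]; fun_prop
  have hoff : ∀ t, DifferentiableAt ℝ (fun p => (granPhi n W ρ γ1 p).2 t) (r, γ) := by
    intro t
    simp only [granPhi_snd_apply, granOffDiag]
    exact ((hκ _ _).const_mul W).fun_neg.fun_div_real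
      (((hpow _ _).const_mul _).fun_mul (hpow _ _))
      (by have := hr ⟨t, by omega⟩; have := hr ⟨t + 1, by omega⟩; positivity)
  exact (differentiableAt_pi.2 hdiag).prodMk (differentiableAt_pi.2 hoff)

theorem eq_zero_of_hasLineDerivAt_granPhi (hn : 2 ≤ n) (hW : 0 < W) (hρ : 0 < ρ)
    (hγ1 : 0 ≤ γ1) {r : Fin n → ℝ} (hr : ∀ i, 0 < r i) {γ : Fin (n - 1) → ℝ}
    {u : (Fin n → ℝ) × (Fin (n - 1) → ℝ)}
    (hu : HasLineDerivAt ℝ (granPhi n W ρ γ1) 0 (r, γ) u) : u = 0 := by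
  have hc : 0 < 4 / 3 * π * ρ := by positivity
  have hdiag : ∀ j,
      HasDerivAt (fun τ : ℝ => (granPhi n W ρ γ1 ((r, γ) + τ • u)).1 j) 0 0 :=
    fun j => by simpa using hasDerivAt_pi.1 (hasFDerivAt_fst.comp_hasDerivAt (0 : ℝ) hu) j
  have hoff : ∀ t,
      HasDerivAt (fun τ : ℝ => (granPhi n W ρ γ1 ((r, γ) + τ • u)).2 t) 0 0 :=
    fun t => by simpa using hasDerivAt_pi.1 (hasFDerivAt_snd.comp_hasDerivAt (0 : ℝ) hu) t
  have hradii : u.1 = 0 := by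
    obtain ⟨a0, a1, ha0, ha1, hD⟩ :=
      exists_hasDerivAt_granFirstDiag_line hW hc hγ1 (hr ⟨0, by omega⟩) (hr ⟨1, hn⟩)
    refine Fin.eq_zero_of_consecutive_relations hn ha0 ha1 ?_ fun t => ?_
    · exact (hD _ _).unique (by simpa [granPhi_fst_zero hn] using hdiag ⟨0, by omega⟩)
    · obtain ⟨b0, b1, hb0, hb1, hF⟩ :=
        exists_hasDerivAt_granOffDiag_line hW hc (hr ⟨t, by omega⟩) (hr ⟨t + 1, by omega⟩)
      exact ⟨b0, b1, hb0, hb1, (hF _ _).unique (by simpa [granPhi_snd_apply] using hoff t)⟩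
  have hstiff : u.2 = 0 := by
    funext s
    set D := 4 / 3 * π * ρ * r ⟨s + 1, by omega⟩ ^ 3
    have hD : D ≠ 0 := by have := hr ⟨s + 1, by omega⟩; positivity
    have hline :
        (fun τ : ℝ => (granPhi n W ρ γ1 ((r, γ) + τ • u)).1 ⟨s + 1, by omega⟩) =
          fun τ => (granPhi n W ρ γ1 (r, 0)).1 ⟨s + 1, by omega⟩ +
            (γ s + τ * u.2 s) / D := by
      funext τ
      rw [show (r, γ) + τ • u = (r, γ + τ • u.2) by ext <;> simp [hradii], granPhi_fst_succ]
      simp [D]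
    have h := (((hasDerivAt_line _ _).div_const D).const_add _).unique
      (hline ▸ hdiag ⟨s + 1, by omega⟩)
    simpa [hD] using h
  exact Prod.ext hradii hstiff

end GranPhi

/-- The Jacobian of the map `Φ = (diagonal entries, off-diagonal entries)` of the
granular-chain associated matrix, with respect to `(r, γ)`, is invertible at every point
with all radii positive. -/
theorem granPhi_jacobian_det_ne_zero
    (n : ℕ) (hn : 2 ≤ n) (W ρ γ1 : ℝ) (hW : 0 < W) (hρ : 0 < ρ) (hγ1 : 0 ≤ γ1)
    (r : Fin n → ℝ) (hr : ∀ i, 0 < r i) (γrest : Fin (n - 1) → ℝ) :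
    LinearMap.det
      ((fderiv ℝ (granPhi n W ρ γ1) (r, γrest) :
        ((Fin n → ℝ) × (Fin (n - 1) → ℝ)) →L[ℝ] ((Fin n → ℝ) × (Fin (n - 1) → ℝ))) :
        ((Fin n → ℝ) × (Fin (n - 1) → ℝ)) →ₗ[ℝ] ((Fin n → ℝ) × (Fin (n - 1) → ℝ))) ≠ 0 := by
  have hΦ : HasFDerivAt (granPhi n W ρ γ1) _ (r, γrest) :=
    (differentiableAt_granPhi hρ hr γrest).hasFDerivAt
  rw [Ne, LinearMap.det_eq_zero_iff_ker_ne_bot, not_not, LinearMap.ker_eq_bot']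
  intro u hu
  rw [ContinuousLinearMap.coe_coe] at hu
  exact eq_zero_of_hasLineDerivAt_granPhi hn hW hρ hγ1 hr (hu ▸ hΦ.hasLineDerivAt u)
end
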